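/- Let p be a prime, R a commutative ring of characteristic p, and φ : R → R an additive map satisfying φ(a^p · b) = a · φ(b) for all a, b ∈ R and φ(1) = 1 (a Frobenius splitting of R). Then R is reduced, i.e., it has no nonzero nilpotent elements. -/

import Mathlib

/-! A Frobenius splitting `φ` is a left inverse of `a ↦ a ^ p`, so the `p`-th power map is
injective and `x ^ p = 0 = 0 ^ p` forces `x = 0`. -/

theorem leftInverse_pow_of_frobenius_linear {M : Type*} [Monoid M] {p : ℕ} {φ : M → M}
    (hfrob : ∀ a b : M, φ (a ^ p * b) = a * φ b) (hone : φ 1 = 1) :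
    Function.LeftInverse φ (· ^ p) := fun a => by
  simpa [hone] using hfrob a 1

theorem isReduced_of_frobenius_linear {M : Type*} [MonoidWithZero M] {p : ℕ} (hp : 1 < p)
    {φ : M → M} (hfrob : ∀ a b : M, φ (a ^ p * b) = a * φ b) (hone : φ 1 = 1) :
    IsReduced M :=
  (isReduced_iff_pow_one_lt p hp).2 fun x hx =>
    (leftInverse_pow_of_frobenius_linear hfrob hone).injective <| by
      simp [hx, zero_pow (zero_lt_one.trans hp).ne']

theorem stmt_0_general (p : ℕ) (hp : p.Prime) (R : Type*) [CommRing R]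
    (φ : R → R)
    (hfrob : ∀ a b : R, φ (a ^ p * b) = a * φ b) (hone : φ 1 = 1) :
    ∀ x : R, IsNilpotent x → x = 0 :=
  (isReduced_of_frobenius_linear hp.one_lt hfrob hone).eq_zero

/-- A Frobenius split commutative ring of prime characteristic `p` is reduced. -/
theorem stmt_0 (p : ℕ) (hp : p.Prime) (R : Type*) [CommRing R] [CharP R p]
    (φ : R → R) (hadd : ∀ a b : R, φ (a + b) = φ a + φ b)
    (hfrob : ∀ a b : R, φ (a ^ p * b) = a * φ b) (hone : φ 1 = 1) :
    ∀ x : R, IsNilpotent x → x = 0 :=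
  stmt_0_general p hp R φ hfrob hone
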